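/- Let G = (V,E) be a finite graph. Define the structure 𝒜 with domain V ∪ E, unary relations N = V and P = E, and binary relation I = {(a,e) : a ∈ V, e ∈ E, a is an endpoint of e}. Let φ(x) := ∀y ( N(x) ∧ (¬P(y) ∨ ¬I(x,y) ∨ =(y,x)) ) be the dependence logic formula with one free variable x and one universal quantifier. Then for every k: there is a team T over {x} in 𝒜 with |T| = k and 𝒜,T ⊨ φ if and only if G has an independent set of size k. -/

import Mathlib

/-- First-order terms built from variables and function symbols. -/
inductive Term (F V : Type) (arF : F → ℕ) : Type where
  | var : V → Term F V arF
  | func : (f : F) → (Fin (arF f) → Term F V arF) → Term F V arF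

/-- Evaluation of a term under an assignment `s`. -/
def Term.eval {F V A : Type} {arF : F → ℕ} (fI : (f : F) → (Fin (arF f) → A) → A)
    (s : V → A) : Term F V arF → A
  | .var x => s x
  | .func f ts => fI f fun i => (ts i).eval fI s

/-- Variables occurring in a term. -/
def Term.vars {F V : Type} {arF : F → ℕ} : Term F V arF → Set V
  | .var x => {x}
  | .func _ ts => ⋃ i, (ts i).vars

/-- Formulas of first-order logic in negation normal form, extended by
dependence atoms `dep`, inclusion atoms `inc`, and independence atoms `indep`. -/
inductive TForm (R F V : Type) (arR : R → ℕ) (arF : F → ℕ) : Type where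
  | eq  : Term F V arF → Term F V arF → TForm R F V arR arF
  | neq : Term F V arF → Term F V arF → TForm R F V arR arF
  | rel  : (r : R) → (Fin (arR r) → Term F V arF) → TForm R F V arR arF
  | nrel : (r : R) → (Fin (arR r) → Term F V arF) → TForm R F V arR arF
  | dep : List (Term F V arF) → List (Term F V arF) → TForm R F V arR arF
  | inc : List (Term F V arF) → List (Term F V arF) → TForm R F V arR arF
  | indep : List (Term F V arF) → List (Term F V arF) → List (Term F V arF) →
      TForm R F V arR arF
  | and : TForm R F V arR arF → TForm R F V arR arF → TForm R F V arR arF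
  | or  : TForm R F V arR arF → TForm R F V arR arF → TForm R F V arR arF
  | ex  : V → TForm R F V arR arF → TForm R F V arR arF
  | all : V → TForm R F V arR arF → TForm R F V arR arF

/-- A first-order structure: interpretations of relation and function symbols. -/
structure Str (R F : Type) (arR : R → ℕ) (arF : F → ℕ) (A : Type) where
  relI : (r : R) → (Fin (arR r) → A) → Prop
  funI : (f : F) → (Fin (arF f) → A) → A

/-- Evaluation of a tuple (list) of terms. -/
def evalT {R F V A : Type} {arR : R → ℕ} {arF : F → ℕ} (M : Str R F arR arF A)
    (s : V → A) (ts : List (Term F V arF)) : List A :=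
  ts.map (Term.eval M.funI s)

/-- Team semantics.  A team is a set of assignments `V → A`.  Disjunction splits
the team, `∃x` uses a supplementing function into nonempty sets of values, and
`∀x` uses the full supplemented team. -/
def TSat {R F V A : Type} {arR : R → ℕ} {arF : F → ℕ} [DecidableEq V]
    (M : Str R F arR arF A) : TForm R F V arR arF → Set (V → A) → Prop
  | .eq t u, T => ∀ s ∈ T, t.eval M.funI s = u.eval M.funI s
  | .neq t u, T => ∀ s ∈ T, t.eval M.funI s ≠ u.eval M.funI s
  | .rel r ts, T => ∀ s ∈ T, M.relI r fun i => (ts i).eval M.funI s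
  | .nrel r ts, T => ∀ s ∈ T, ¬ M.relI r fun i => (ts i).eval M.funI s
  | .dep ts us, T => ∀ s₁ ∈ T, ∀ s₂ ∈ T,
      evalT M s₁ ts = evalT M s₂ ts → evalT M s₁ us = evalT M s₂ us
  | .inc ts us, T => ∀ s₁ ∈ T, ∃ s₂ ∈ T, evalT M s₁ ts = evalT M s₂ us
  | .indep ts us vs, T => ∀ s₁ ∈ T, ∀ s₂ ∈ T, evalT M s₁ vs = evalT M s₂ vs →
      ∃ s₃ ∈ T, evalT M s₃ vs = evalT M s₁ vs ∧ evalT M s₃ ts = evalT M s₁ ts ∧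
        evalT M s₃ us = evalT M s₂ us
  | .and φ ψ, T => TSat M φ T ∧ TSat M ψ T
  | .or φ ψ, T => ∃ T₁ T₂ : Set (V → A), T₁ ∪ T₂ = T ∧ TSat M φ T₁ ∧ TSat M ψ T₂
  | .ex x φ, T => ∃ f : (V → A) → Set A, (∀ s ∈ T, (f s).Nonempty) ∧
      TSat M φ {s' | ∃ s ∈ T, ∃ a ∈ f s, s' = Function.update s x a}
  | .all x φ, T => TSat M φ {s' | ∃ s ∈ T, ∃ a : A, s' = Function.update s x a}

/-- Classical Tarski semantics (the value on team atoms is irrelevant and set to `True`). -/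
def Sat {R F V A : Type} {arR : R → ℕ} {arF : F → ℕ} [DecidableEq V]
    (M : Str R F arR arF A) : (V → A) → TForm R F V arR arF → Prop
  | s, .eq t u => t.eval M.funI s = u.eval M.funI s
  | s, .neq t u => t.eval M.funI s ≠ u.eval M.funI s
  | s, .rel r ts => M.relI r fun i => (ts i).eval M.funI s
  | s, .nrel r ts => ¬ M.relI r fun i => (ts i).eval M.funI s
  | _, .dep _ _ => True
  | _, .inc _ _ => True
  | _, .indep _ _ _ => True
  | s, .and φ ψ => Sat M s φ ∧ Sat M s ψ
  | s, .or φ ψ => Sat M s φ ∨ Sat M s ψ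
  | s, .ex x φ => ∃ a : A, Sat M (Function.update s x a) φ
  | s, .all x φ => ∀ a : A, Sat M (Function.update s x a) φ

/-- A pure first-order formula: no dependence, inclusion, or independence atoms. -/
def TForm.IsFO {R F V : Type} {arR : R → ℕ} {arF : F → ℕ} :
    TForm R F V arR arF → Prop
  | .dep _ _ => False
  | .inc _ _ => False
  | .indep _ _ _ => False
  | .and φ ψ => φ.IsFO ∧ ψ.IsFO
  | .or φ ψ => φ.IsFO ∧ ψ.IsFO
  | .ex _ φ => φ.IsFO
  | .all _ φ => φ.IsFO
  | _ => True

/-- A dependence logic formula: no inclusion or independence atoms. -/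
def TForm.IsDep {R F V : Type} {arR : R → ℕ} {arF : F → ℕ} :
    TForm R F V arR arF → Prop
  | .inc _ _ => False
  | .indep _ _ _ => False
  | .and φ ψ => φ.IsDep ∧ ψ.IsDep
  | .or φ ψ => φ.IsDep ∧ ψ.IsDep
  | .ex _ φ => φ.IsDep
  | .all _ φ => φ.IsDep
  | _ => True

/-- An inclusion logic formula: no dependence or independence atoms. -/
def TForm.IsInc {R F V : Type} {arR : R → ℕ} {arF : F → ℕ} :
    TForm R F V arR arF → Prop
  | .dep _ _ => False
  | .indep _ _ _ => False
  | .and φ ψ => φ.IsInc ∧ ψ.IsInc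
  | .or φ ψ => φ.IsInc ∧ ψ.IsInc
  | .ex _ φ => φ.IsInc
  | .all _ φ => φ.IsInc
  | _ => True

/-- An independence logic formula: no dependence or inclusion atoms. -/
def TForm.IsInd {R F V : Type} {arR : R → ℕ} {arF : F → ℕ} :
    TForm R F V arR arF → Prop
  | .dep _ _ => False
  | .inc _ _ => False
  | .and φ ψ => φ.IsInd ∧ ψ.IsInd
  | .or φ ψ => φ.IsInd ∧ ψ.IsInd
  | .ex _ φ => φ.IsInd
  | .all _ φ => φ.IsInd
  | _ => True

/-- Variables of a list of terms. -/
def varsL {F V : Type} {arF : F → ℕ} (ts : List (Term F V arF)) : Set V :=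
  ⋃ t ∈ ts, Term.vars t

/-- Free variables of a formula. -/
def TForm.fr {R F V : Type} {arR : R → ℕ} {arF : F → ℕ} :
    TForm R F V arR arF → Set V
  | .eq t u => t.vars ∪ u.vars
  | .neq t u => t.vars ∪ u.vars
  | .rel _ ts => ⋃ i, (ts i).vars
  | .nrel _ ts => ⋃ i, (ts i).vars
  | .dep ts us => varsL ts ∪ varsL us
  | .inc ts us => varsL ts ∪ varsL us
  | .indep ts us vs => varsL ts ∪ varsL us ∪ varsL vs
  | .and φ ψ => φ.fr ∪ ψ.fr
  | .or φ ψ => φ.fr ∪ ψ.fr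
  | .ex x φ => φ.fr \ {x}
  | .all x φ => φ.fr \ {x}

open Classical in
/-- The restriction `T↾X` of a team to a set of variables, realized by setting
all variables outside `X` to the default value. -/
noncomputable def restrictTeam {V A : Type} [Inhabited A] (X : Set V)
    (T : Set (V → A)) : Set (V → A) :=
  (fun s v => if v ∈ X then s v else default) '' T

/-- The relation symbols N (vertices), P (edges), I (incidence). -/
inductive GSym : Type where
  | N | P | I
deriving DecidableEq

/-- Arities: N and P are unary, I is binary. -/
def GSym.ar : GSym → ℕ
  | .N => 1
  | .P => 1
  | .I => 2

/-- The structure `𝒜` with domain `V ∪ E`, `N = V`, `P = E` and incidence `I`. -/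
def indepStr {Vv : Type} (G : SimpleGraph Vv) :
    Str GSym Empty GSym.ar (fun e => e.elim) (Vv ⊕ G.edgeSet) :=
  ⟨fun r => match r with
    | .N => fun (v : Fin 1 → (Vv ⊕ G.edgeSet)) => ∃ a : Vv, v 0 = Sum.inl a
    | .P => fun (v : Fin 1 → (Vv ⊕ G.edgeSet)) => ∃ e : G.edgeSet, v 0 = Sum.inr e
    | .I => fun (v : Fin 2 → (Vv ⊕ G.edgeSet)) => ∃ (a : Vv) (e : G.edgeSet),
        v 0 = Sum.inl a ∧ v 1 = Sum.inr e ∧ a ∈ (e : Sym2 Vv),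
   fun e => e.elim⟩

/-- The dependence logic formula `φ(x) := ∀y (N(x) ∧ (¬P(y) ∨ ¬I(x,y) ∨ =(y,x)))`
(variables `x = 0`, `y = 1`). -/
def indepForm {Vv : Type} (G : SimpleGraph Vv) :
    TForm GSym Empty (Fin 2) GSym.ar (fun e => e.elim) :=
  .all 1 (.and (.rel .N ![.var 0])
    (.or (.nrel .P ![.var 1])
      (.or (.nrel .I ![.var 0, .var 1]) (.dep [.var 1] [.var 0]))))


/-! Over a team of constant vertex assignments `x = y = u`, the quantifier `∀y` followed by the
flat disjuncts `¬P(y)` and `¬I(x,y)` leaves exactly the assignments `(x, y) = (u, e)` with `u`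
an endpoint of the edge `e`. Dependence logic is downward closed, so `=(y,x)` has to hold on all
of them, which says that no edge has two distinct endpoints among the vertices of the team:
these vertices form an independent set, of the same size as the team. -/

section TeamSemantics

variable {R F V A : Type} {arR : R → ℕ} {arF : F → ℕ} [DecidableEq V]
  (M : Str R F arR arF A)

theorem TSat.of_subset {φ : TForm R F V arR arF} (hφ : φ.IsDep) {X Y : Set (V → A)}
    (hYX : Y ⊆ X) (hX : TSat M φ X) : TSat M φ Y := by
  induction φ generalizing X Y with
  | eq | neq | rel | nrel => exact fun s hs => hX s (hYX hs)
  | dep => exact fun s₁ hs₁ s₂ hs₂ => hX s₁ (hYX hs₁) s₂ (hYX hs₂)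
  | inc | indep => exact hφ.elim
  | and φ ψ ihφ ihψ => exact ⟨ihφ hφ.1 hYX hX.1, ihψ hφ.2 hYX hX.2⟩
  | or φ ψ ihφ ihψ =>
    obtain ⟨T₁, T₂, hT, h₁, h₂⟩ := hX
    refine ⟨T₁ ∩ Y, T₂ ∩ Y, ?_, ihφ hφ.1 Set.inter_subset_left h₁,
      ihψ hφ.2 Set.inter_subset_left h₂⟩
    rw [← Set.union_inter_distrib_right, hT, Set.inter_eq_right.mpr hYX]
  | ex x φ ih =>
    obtain ⟨f, hf, h⟩ := hX
    exact ⟨f, fun s hs => hf s (hYX hs),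
      ih hφ (by rintro _ ⟨s, hs, a, ha, rfl⟩; exact ⟨s, hYX hs, a, ha, rfl⟩) h⟩
  | all x φ ih => exact ih hφ (by rintro _ ⟨s, hs, a, rfl⟩; exact ⟨s, hYX hs, a, rfl⟩) hX

theorem tSat_or_nrel_iff {φ : TForm R F V arR arF} (hφ : φ.IsDep) (r : R)
    (ts : Fin (arR r) → Term F V arF) (X : Set (V → A)) :
    TSat M (.or (.nrel r ts) φ) X ↔
      TSat M φ {s ∈ X | M.relI r fun i => (ts i).eval M.funI s} := by
  constructor
  · rintro ⟨T₁, T₂, rfl, h₁, h₂⟩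
    refine TSat.of_subset M hφ (fun s ⟨hs, hr⟩ => ?_) h₂
    exact hs.resolve_left fun hs₁ => h₁ s hs₁ hr
  · intro h
    refine ⟨{s ∈ X | ¬M.relI r fun i => (ts i).eval M.funI s}, _, ?_, fun s hs => hs.2, h⟩
    ext s
    simp only [Set.mem_union, Set.mem_ofPred_eq]
    tauto

end TeamSemantics

theorem SimpleGraph.not_adj_iff_forall_edge {V : Type} (G : SimpleGraph V) (a b : V) :
    ¬G.Adj a b ↔ ∀ e : G.edgeSet, a ∈ (e : Sym2 V) → b ∈ (e : Sym2 V) → a = b := by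
  simp only [G.adj_iff_exists_edge, Subtype.forall]
  grind

section IndependentSetTeams

variable {Vv : Type} (G : SimpleGraph Vv)

theorem tSat_rel_N_supplement_iff (X : Set (Fin 2 → Vv ⊕ G.edgeSet)) :
    TSat (indepStr G) (.rel .N ![.var 0]) {s' | ∃ s ∈ X, ∃ c, s' = Function.update s 1 c} ↔
      ∀ s ∈ X, ∃ a, s 0 = .inl a := by
  constructor
  · intro h s hs
    exact h s ⟨s, hs, s 1, (Function.update_eq_self _ _).symm⟩
  · rintro h _ ⟨s, hs, c, rfl⟩
    exact h s hs

theorem tSat_indepForm_iff (X : Set (Fin 2 → Vv ⊕ G.edgeSet)) :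
    TSat (indepStr G) (indepForm G) X ↔ (∀ s ∈ X, ∃ a, s 0 = .inl a) ∧
      ∀ s₁ ∈ X, ∀ s₂ ∈ X, ∀ a b, s₁ 0 = .inl a → s₂ 0 = .inl b → ¬G.Adj a b := by
  rw [indepForm, TSat, TSat]
  -- `erw`: the vectors `![…]` have type `Fin (GSym.ar _) → _` only after unfolding `GSym.ar`.
  erw [tSat_or_nrel_iff _ (by simp [TForm.IsDep]), tSat_or_nrel_iff _ (by simp [TForm.IsDep])]
  refine and_congr (tSat_rel_N_supplement_iff G X) ?_
  simp only [SimpleGraph.not_adj_iff_forall_edge]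
  constructor
  · intro h s₁ h₁ s₂ h₂ a b ha hb e hae hbe
    have hx := h (Function.update s₁ 1 (.inr e))
      ⟨⟨⟨s₁, h₁, _, rfl⟩, e, rfl⟩, a, e, ha, rfl, hae⟩
      (Function.update s₂ 1 (.inr e))
      ⟨⟨⟨s₂, h₂, _, rfl⟩, e, rfl⟩, b, e, hb, rfl, hbe⟩ rfl
    simpa only [evalT, List.map_cons, List.map_nil, List.cons.injEq, and_true, Term.eval,
      Function.update_of_ne zero_ne_one, ha, hb, Sum.inl.injEq] using hx
  · rintro h _ ⟨⟨⟨s₁, h₁, c₁, rfl⟩, -⟩, a, e, ha, he, hae⟩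
      _ ⟨⟨⟨s₂, h₂, c₂, rfl⟩, -⟩, b, e', hb, he', hbe⟩ heq
    simp only [evalT, List.map_cons, List.map_nil, List.cons.injEq, and_true, Term.eval,
      Matrix.cons_val_zero, Matrix.cons_val_one, Matrix.cons_val_fin_one, Function.update_self,
      Function.update_of_ne zero_ne_one] at ha he hb he' heq ⊢
    obtain rfl : e = e' := Sum.inr.inj (he.symm.trans (heq.trans he'))
    rw [ha, hb, h s₁ h₁ s₂ h₂ a b ha hb e hae hbe]

def vertexAssignment (u : Vv) : Fin 2 → Vv ⊕ G.edgeSet := fun _ => .inl u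

theorem vertexAssignment_injective : (vertexAssignment G).Injective :=
  fun _ _ h => Sum.inl_injective (congrFun h 0)

theorem mem_range_vertexAssignment_iff (s : Fin 2 → Vv ⊕ G.edgeSet) :
    s ∈ Set.range (vertexAssignment G) ↔ (∀ v, s v = s 0) ∧ ∃ a, s 0 = .inl a := by
  constructor
  · rintro ⟨a, rfl⟩
    exact ⟨fun _ => rfl, a, rfl⟩
  · rintro ⟨hconst, a, ha⟩
    exact ⟨a, funext fun v => by rw [hconst, ha, vertexAssignment]⟩

theorem tSat_indepForm_image_iff (S : Set Vv) :
    TSat (indepStr G) (indepForm G) (vertexAssignment G '' S) ↔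
      ∀ u ∈ S, ∀ v ∈ S, ¬G.Adj u v := by
  simp [tSat_indepForm_iff, vertexAssignment]

end IndependentSetTeams

theorem independentSet_iff_team_general {Vv : Type}
    (G : SimpleGraph Vv) (k : ℕ) :
    (∃ T : Finset (Fin 2 → (Vv ⊕ G.edgeSet)),
        (∀ s ∈ T, ∀ v : Fin 2, s v = s 0) ∧ T.card = k ∧
        TSat (indepStr G) (indepForm G) (↑T : Set (Fin 2 → (Vv ⊕ G.edgeSet)))) ↔
    (∃ S : Finset Vv, S.card = k ∧ ∀ u ∈ S, ∀ v ∈ S, ¬ G.Adj u v) := by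
  classical
  constructor
  · rintro ⟨T, hconst, rfl, hT⟩
    have hrange : ↑T ⊆ vertexAssignment G '' Set.univ := fun s hs => by
      rw [Set.image_univ, mem_range_vertexAssignment_iff]
      exact ⟨hconst s hs, ((tSat_indepForm_iff G _).mp hT).1 s hs⟩
    obtain ⟨S, -, rfl⟩ := Finset.subset_set_image_iff.mp hrange
    rw [Finset.coe_image, tSat_indepForm_image_iff] at hT
    exact ⟨S, (Finset.card_image_of_injective _ (vertexAssignment_injective G)).symm, hT⟩
  · rintro ⟨S, rfl, hS⟩
    refine ⟨S.image (vertexAssignment G), ?_,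
      Finset.card_image_of_injective _ (vertexAssignment_injective G), ?_⟩
    · simp [vertexAssignment]
    · rwa [Finset.coe_image, tSat_indepForm_image_iff]

/-- There is a team `T` over `{x}` of size `k` satisfying `φ` in `𝒜`
iff `G` has an independent set of size `k`.  Teams with domain `{x}` are
represented by teams of constant assignments. -/
theorem independentSet_iff_team {Vv : Type} [Fintype Vv] [DecidableEq Vv]
    (G : SimpleGraph Vv) (k : ℕ) :
    (∃ T : Finset (Fin 2 → (Vv ⊕ G.edgeSet)),
        (∀ s ∈ T, ∀ v : Fin 2, s v = s 0) ∧ T.card = k ∧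
        TSat (indepStr G) (indepForm G) (↑T : Set (Fin 2 → (Vv ⊕ G.edgeSet)))) ↔
    (∃ S : Finset Vv, S.card = k ∧ ∀ u ∈ S, ∀ v ∈ S, ¬ G.Adj u v) :=
  independentSet_iff_team_general G k
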